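/- Let K ≥ 1, let q : PMF (Bool × Bool) and r : Fin K → PMF (Bool × Bool), and suppose that for every z : Fin K the pair (q, r z) satisfies the IV inequalities. Then there exists μ : PMF ((Fin K → Bool) × (Bool × Bool)) — a pair t = (f, (y₀, y₁)) interpreted as values of the counterfactuals (X(z₁), …, X(z_K), Y(x₀), Y(x₁)) — such that μ.map Prod.snd = q and, for every z : Fin K, μ.map (fun t => (t.1 z, if t.1 z then t.2.2 else t.2.1)) = r z. -/

import Mathlib

/-- The probability (as a real number) that a PMF assigns to a set. -/
noncomputable def pr {α : Type*} (p : PMF α) (s : Set α) : ℝ := (p.toOuterMeasure s).toReal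

/-- `(q, r)` satisfies the IV inequalities (marg) and (joint), where `q` is a putative joint
law of the potential outcomes `(Y(x₀), Y(x₁))` and `r` a putative law of `(X, Y)` given
`Z = z`. -/
def SatisfiesIV (q r : PMF (Bool × Bool)) : Prop :=
  (∀ i y : Bool,
    pr q {p | (if i then p.2 else p.1) = y} ≤ pr r {(i, y)} + pr r {p | p.1 = !i}) ∧
  (∀ y y' : Bool, pr q {(y, y')} ≤ pr r {(false, y)} + pr r {(true, y')})

open scoped ENNReal

lemma pr_singleton (p : PMF (Bool × Bool)) (a : Bool × Bool) : pr p {a} = (p a).toReal := by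
  rw [pr, PMF.toOuterMeasure_apply_singleton]

lemma pr_fst (p : PMF (Bool × Bool)) (c : Bool) :
    pr p {pa : Bool × Bool | pa.1 = c} = (p (c, false)).toReal + (p (c, true)).toReal := by
  classical
  have h : p.toOuterMeasure {pa : Bool × Bool | pa.1 = c} = p (c, false) + p (c, true) := by
    rw [PMF.toOuterMeasure_apply_fintype, Fintype.sum_prod_type]
    cases c <;> simp [Set.indicator_apply, Set.mem_setOf_eq] <;> ring
  rw [pr, h, ENNReal.toReal_add (p.apply_ne_top _) (p.apply_ne_top _)]

lemma pr_snd (p : PMF (Bool × Bool)) (c : Bool) :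
    pr p {pa : Bool × Bool | pa.2 = c} = (p (false, c)).toReal + (p (true, c)).toReal := by
  classical
  have h : p.toOuterMeasure {pa : Bool × Bool | pa.2 = c} = p (false, c) + p (true, c) := by
    rw [PMF.toOuterMeasure_apply_fintype, Fintype.sum_prod_type]
    cases c <;> simp [Set.indicator_apply, Set.mem_setOf_eq] <;> ring
  rw [pr, h, ENNReal.toReal_add (p.apply_ne_top _) (p.apply_ne_top _)]

lemma sum_four (p : PMF (Bool × Bool)) :
    (p (false,false)).toReal + (p (false,true)).toReal + (p (true,false)).toReal
      + (p (true,true)).toReal = 1 := by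
  have h : p (false,false) + p (false,true) + (p (true,false) + p (true,true)) = 1 := by
    have ht := p.tsum_coe
    rw [tsum_fintype, Fintype.sum_prod_type] at ht
    simpa [add_comm, add_left_comm, add_assoc] using ht
  have h2 := congrArg ENNReal.toReal h
  rw [ENNReal.toReal_add (by exact ENNReal.add_ne_top.2 ⟨p.apply_ne_top _, p.apply_ne_top _⟩)
      (by exact ENNReal.add_ne_top.2 ⟨p.apply_ne_top _, p.apply_ne_top _⟩),
    ENNReal.toReal_add (p.apply_ne_top _) (p.apply_ne_top _),
    ENNReal.toReal_add (p.apply_ne_top _) (p.apply_ne_top _)] at h2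
  simp at h2
  linarith

lemma feasible (Q R : Bool → Bool → ℝ)
    (hQ : ∀ u v, 0 ≤ Q u v) (hR : ∀ u v, 0 ≤ R u v)
    (hQ1 : Q false false + Q false true + Q true false + Q true true = 1)
    (hR1 : R false false + R false true + R true false + R true true = 1)
    (hj : ∀ u v, Q u v ≤ R false u + R true v)
    (hmF : ∀ y, R false y ≤ Q y false + Q y true)
    (hmT : ∀ y, R true y ≤ Q false y + Q true y) :
    ∃ b : Bool → Bool → ℝ,
      (∀ u v, 0 ≤ b u v) ∧ (∀ u v, b u v ≤ Q u v) ∧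
      (∀ u, b u false + b u true = R false u) ∧
      (∀ v, b false v + b true v = Q false v + Q true v - R true v) := by
  have jff := hj false false; have jft := hj false true
  have jtf := hj true false; have jtt := hj true true
  have mFf := hmF false; have mFt := hmF true
  have mTf := hmT false; have mTt := hmT true
  have nQff := hQ false false; have nQft := hQ false true
  have nQtf := hQ true false; have nQtt := hQ true true
  have nRff := hR false false; have nRft := hR false true
  have nRtf := hR true false; have nRtt := hR true true
  set C0 : ℝ := Q false false + Q true false - R true false with hC0
  set t : ℝ := max (max 0 (R false false - Q false true)) (max (C0 - Q true false) (C0 - R false true)) with htdef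
  have l1 : (0:ℝ) ≤ t := le_trans (le_max_left _ _) (le_max_left _ _)
  have l2 : R false false - Q false true ≤ t := le_trans (le_max_right _ _) (le_max_left _ _)
  have l3 : C0 - Q true false ≤ t := le_trans (le_max_left _ _) (le_max_right _ _)
  have l4 : C0 - R false true ≤ t := le_trans (le_max_right _ _) (le_max_right _ _)
  have hU1 : t ≤ Q false false := by
    refine max_le (max_le ?_ ?_) (max_le ?_ ?_) <;> linarith
  have hU2 : t ≤ R false false := by
    refine max_le (max_le ?_ ?_) (max_le ?_ ?_) <;> linarith
  have hU3 : t ≤ C0 := by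
    refine max_le (max_le ?_ ?_) (max_le ?_ ?_) <;> linarith
  have hU4 : t ≤ Q true true + C0 - R false true := by
    refine max_le (max_le ?_ ?_) (max_le ?_ ?_) <;> linarith
  refine ⟨fun u v => if u then (if v then R false true - (C0 - t) else C0 - t)
    else (if v then R false false - t else t), ?_, ?_, ?_, ?_⟩
  · rintro (_|_) (_|_) <;> simp <;> linarith
  · rintro (_|_) (_|_) <;> simp <;> linarith
  · rintro (_|_) <;> simp <;> linarith
  · rintro (_|_) <;> simp <;> linarith

/-- The completeness direction `𝒯 ⊆ φ(M₁)` of Theorem 1: if `(q, r z)` satisfies the IV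
inequalities for every level `z` of the instrument, then there is a joint law `μ` of the
counterfactuals `(X(z₁), …, X(z_K), Y(x₀), Y(x₁))` with `(Y(x₀), Y(x₁))`-marginal `q`
whose induced law of `(X(z), Y(x_{X(z)}))` is `r z` for every `z`. -/
theorem iv_completeness
    {K : ℕ} (hK : 1 ≤ K)
    (q : PMF (Bool × Bool)) (r : Fin K → PMF (Bool × Bool))
    (hIV : ∀ z : Fin K, SatisfiesIV q (r z)) :
    ∃ μ : PMF ((Fin K → Bool) × (Bool × Bool)),
      μ.map Prod.snd = q ∧
      ∀ z : Fin K,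
        μ.map (fun t => (t.1 z, if t.1 z then t.2.2 else t.2.1)) = r z := by
  classical
  -- Step 1: feasible sub-mass `b z` for each instrument level
  have hb : ∀ z : Fin K, ∃ b : Bool → Bool → ℝ,
      (∀ u v, 0 ≤ b u v) ∧ (∀ u v, b u v ≤ (q (u,v)).toReal) ∧
      (∀ u, b u false + b u true = ((r z) (false,u)).toReal) ∧
      (∀ v, b false v + b true v =
        (q (false,v)).toReal + (q (true,v)).toReal - ((r z) (true,v)).toReal) := by
    intro z
    have hsetF : ∀ c : Bool,
        {p : Bool × Bool | (if (false:Bool) then p.2 else p.1) = c}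
          = {p : Bool × Bool | p.1 = c} := by intro c; ext p; simp
    have hsetT : ∀ c : Bool,
        {p : Bool × Bool | (if (true:Bool) then p.2 else p.1) = c}
          = {p : Bool × Bool | p.2 = c} := by intro c; ext p; simp
    have s1 := sum_four q; have s2 := sum_four (r z)
    refine feasible (fun u v => (q (u,v)).toReal) (fun i y => ((r z) (i,y)).toReal)
      ?_ ?_ ?_ ?_ ?_ ?_ ?_
    · intro u v; exact ENNReal.toReal_nonneg
    · intro u v; exact ENNReal.toReal_nonneg
    · exact sum_four q
    · exact sum_four (r z)
    · intro u v
      have h := (hIV z).2 u v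
      rwa [pr_singleton, pr_singleton, pr_singleton] at h
    · intro y
      have h := (hIV z).1 false (!y)
      rw [hsetF, pr_fst] at h
      have h2 : {p : Bool × Bool | p.1 = !false} = {p : Bool × Bool | p.1 = true} := by
        simp
      rw [h2, pr_fst, pr_singleton] at h
      cases y <;> simp only [Bool.not_false, Bool.not_true] at h <;> linarith
    · intro y
      have h := (hIV z).1 true (!y)
      rw [hsetT, pr_snd] at h
      have h2 : {p : Bool × Bool | p.1 = !true} = {p : Bool × Bool | p.1 = false} := by
        simp
      rw [h2, pr_fst, pr_singleton] at h
      cases y <;> simp only [Bool.not_false, Bool.not_true] at h <;> linarith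
  choose b hb0 hbQ hbrow hbcol using hb
  -- Step 2: the conditional weights, in ℝ≥0∞
  set B : Fin K → Bool × Bool → ℝ≥0∞ := fun z y => ENNReal.ofReal (b z y.1 y.2) with hBdef
  have hBle : ∀ z y, B z y ≤ q y := by
    intro z y
    calc B z y ≤ ENNReal.ofReal ((q (y.1, y.2)).toReal) :=
          ENNReal.ofReal_le_ofReal (hbQ z y.1 y.2)
    _ = q y := by rw [ENNReal.ofReal_toReal (q.apply_ne_top _)]
  set w : Fin K → Bool → Bool × Bool → ℝ≥0∞ :=
    fun z x y => if x then 1 - B z y / q y else B z y / q y with hwdef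
  have hdiv1 : ∀ z y, B z y / q y ≤ 1 := by
    intro z y
    by_cases h : q y = 0
    · have : B z y = 0 := le_antisymm (h ▸ hBle z y) zero_le
      simp [this]
    · exact (ENNReal.div_le_iff h (q.apply_ne_top y)).2 (by rw [one_mul]; exact hBle z y)
  have hw1 : ∀ z y, w z false y + w z true y = 1 := by
    intro z y
    simp only [hwdef, if_true, if_false, Bool.false_eq_true]
    exact add_tsub_cancel_of_le (hdiv1 z y)
  have hsum1 : ∀ z y, ∑ x : Bool, w z x y = 1 := by
    intro z y; rw [Fintype.sum_bool, add_comm]; exact hw1 z y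
  have hwf : ∀ z y, q y * w z false y = B z y := by
    intro z y
    by_cases h : q y = 0
    · have hB : B z y = 0 := le_antisymm (h ▸ hBle z y) zero_le
      simp [h, hB]
    · simp only [hwdef, Bool.false_eq_true, if_false]
      exact ENNReal.mul_div_cancel h (q.apply_ne_top y)
  have hwt : ∀ z y, q y * w z true y = q y - B z y := by
    intro z y
    have : q y * w z true y = q y * 1 - q y * (B z y / q y) := by
      simp only [hwdef, if_true]
      exact ENNReal.mul_sub (fun _ _ => q.apply_ne_top y)
    rw [this, mul_one]
    congr 1
    have := hwf z y
    simpa only [hwdef, Bool.false_eq_true, if_false] using this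
  -- Step 3: the coupling μ
  have hnorm : ∑ t : (Fin K → Bool) × (Bool × Bool),
      q t.2 * ∏ z, w z (t.1 z) t.2 = 1 := by
    rw [Fintype.sum_prod_type, Finset.sum_comm]
    have hy : ∀ y : Bool × Bool,
        ∑ f : Fin K → Bool, q y * ∏ z, w z (f z) y = q y := by
      intro y
      rw [← Finset.mul_sum, ← Fintype.prod_sum (fun z x => w z x y)]
      rw [Finset.prod_congr rfl fun z' _ => hsum1 z' y, Finset.prod_const_one, mul_one]
    rw [Finset.sum_congr rfl fun y _ => hy y]
    have := q.tsum_coe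
    rwa [tsum_fintype] at this
  refine ⟨PMF.ofFintype (fun t => q t.2 * ∏ z, w z (t.1 z) t.2) hnorm, ?_, ?_⟩
  · refine PMF.ext fun y' => ?_
    rw [PMF.map_apply, tsum_fintype, Fintype.sum_prod_type]
    simp only [PMF.ofFintype_apply, @Finset.sum_ite_eq _ _ _ (fun _ _ => Classical.propDecidable _), Finset.mem_univ, if_true]
    rw [← Finset.mul_sum, ← Fintype.prod_sum (fun z x => w z x y')]
    rw [Finset.prod_congr rfl fun z' _ => hsum1 z' y', Finset.prod_const_one, mul_one]
  · intro z
    refine PMF.ext fun p => ?_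
    obtain ⟨x, y'⟩ := p
    rw [PMF.map_apply, tsum_fintype, Fintype.sum_prod_type, Finset.sum_comm]
    simp only [PMF.ofFintype_apply]
    have key : ∀ y : Bool × Bool, ∑ f : Fin K → Bool,
        (if (x,y') = (f z, if f z then y.2 else y.1) then q y * ∏ z', w z' (f z') y else 0)
        = (if y' = (if x then y.2 else y.1) then q y * w z x y else 0) := by
      intro y
      set v : Fin K → Bool → ℝ≥0∞ := fun z' x' => if z' = z then
          (if (x,y') = (x', if x' then y.2 else y.1) then w z x' y else 0)
          else w z' x' y with hv
      have step1 : ∀ f : Fin K → Bool,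
          (if (x,y') = (f z, if f z then y.2 else y.1) then q y * ∏ z', w z' (f z') y else 0)
          = q y * ∏ z', v z' (f z') := by
        intro f
        by_cases h : (x,y') = (f z, if f z then y.2 else y.1)
        · rw [if_pos h]
          congr 1
          refine Finset.prod_congr rfl fun z' _ => ?_
          simp only [hv]
          by_cases hz : z' = z
          · subst hz; simp [h]
          · simp [hz]
        · rw [if_neg h, Finset.prod_eq_zero (Finset.mem_univ z)
            (by simp only [hv]; simp [h]), mul_zero]
      rw [Finset.sum_congr rfl fun f _ => step1 f, ← Finset.mul_sum, ← Fintype.prod_sum v]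
      rw [Finset.prod_eq_single_of_mem z (Finset.mem_univ z)
        (fun z' _ hz' => by simp only [hv]; simp only [if_neg hz']; exact hsum1 z' y)]
      have hvz : ∑ j : Bool, v z j = if y' = (if x then y.2 else y.1) then w z x y else 0 := by
        simp only [hv, if_pos rfl]
        rw [Fintype.sum_bool]
        cases x <;> simp [Prod.ext_iff]
      rw [hvz, mul_ite, mul_zero]
    trans ∑ y : Bool × Bool, (if y' = (if x then y.2 else y.1) then q y * w z x y else 0)
    · exact Finset.sum_congr rfl fun y _ => by convert key y
    cases x
    · -- x = false : row sums give r z (false, y')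
      rw [Fintype.sum_prod_type, Finset.sum_comm]
      simp only [Bool.false_eq_true, if_false, Finset.sum_ite_eq, Finset.mem_univ, if_true]
      rw [Fintype.sum_bool, hwf z (y', true), hwf z (y', false)]
      have hrw : r z (false, y') = ENNReal.ofReal (((r z) (false, y')).toReal) :=
        (ENNReal.ofReal_toReal ((r z).apply_ne_top _)).symm
      rw [hrw, ← hbrow z y', ENNReal.ofReal_add (hb0 z y' false) (hb0 z y' true), add_comm]
    · -- x = true : column sums give r z (true, y')
      rw [Fintype.sum_prod_type]
      simp only [if_true, Finset.sum_ite_eq, Finset.mem_univ]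
      rw [Fintype.sum_bool, hwt z (true, y'), hwt z (false, y')]
      have hne1 : q (true, y') - B z (true, y') ≠ ⊤ := by
        exact ne_top_of_le_ne_top (q.apply_ne_top _) tsub_le_self
      have hne2 : q (false, y') - B z (false, y') ≠ ⊤ := by
        exact ne_top_of_le_ne_top (q.apply_ne_top _) tsub_le_self
      apply (ENNReal.toReal_eq_toReal_iff' (ENNReal.add_ne_top.2 ⟨hne1, hne2⟩)
        ((r z).apply_ne_top _)).1
      rw [ENNReal.toReal_add hne1 hne2,
        ENNReal.toReal_sub_of_le (hBle z _) (q.apply_ne_top _),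
        ENNReal.toReal_sub_of_le (hBle z _) (q.apply_ne_top _)]
      have hB1 : (B z (true, y')).toReal = b z true y' := ENNReal.toReal_ofReal (hb0 z true y')
      have hB2 : (B z (false, y')).toReal = b z false y' := ENNReal.toReal_ofReal (hb0 z false y')
      rw [hB1, hB2]
      have := hbcol z y'
      linarith
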